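/- For any ultrafilter U on ω and any function h : ω → ω₁, the minimum over all X ∈ U of the order type of h''X is an (additively) indecomposable ordinal, i.e., equal to ω^β for some ordinal β. -/

import Mathlib

open Ordinal Set

/-- The order type of a set of ordinals: the unique ordinal order-isomorphic to it. -/
noncomputable def otype (S : Set Ordinal.{0}) : Ordinal.{1} :=
  @Ordinal.type S (Subrel (· < ·) S) (by exact (inferInstance : IsWellOrder S (Subrel (· < ·) (· ∈ S))))

/-- `f` is finite-to-one on `X`. -/
def FinToOneOn (f : ℕ → ℕ) (X : Set ℕ) : Prop := ∀ n : ℕ, (X ∩ f ⁻¹' {n}).Finite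

/-- `f` is constant on `X`. -/
def ConstOn (f : ℕ → ℕ) (X : Set ℕ) : Prop := ∃ c : ℕ, ∀ x ∈ X, f x = c

/-- `V >_∞ U`: some `f` pushes `V` forward to `U` but `f` is neither finite-to-one
nor constant on any member of `V`. -/
def InfGT (V U : Ultrafilter ℕ) : Prop :=
  ∃ f : ℕ → ℕ, Ultrafilter.map f V = U ∧ ∀ X ∈ V, ¬ FinToOneOn f X ∧ ¬ ConstOn f X

instance (S : Set Ordinal.{0}) : IsWellOrder S (Subrel (· < ·) S) :=
  (inferInstance : IsWellOrder S (Subrel (· < ·) (· ∈ S)))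

lemma otype_mono {S T : Set Ordinal.{0}} (hST : S ⊆ T) : otype S ≤ otype T :=
  RelEmbedding.ordinal_type_le
    (⟨⟨Set.inclusion hST, Set.inclusion_injective hST⟩, Iff.rfl⟩ :
      Subrel ((· < ·) : Ordinal.{0} → _ → Prop) (· ∈ S) ↪r Subrel (· < ·) (· ∈ T))

lemma otype_split (S : Set Ordinal.{0}) (t : Ordinal.{0}) :
    otype {x ∈ S | x < t} + otype {x ∈ S | t ≤ x} ≤ otype S := by
  rw [otype, otype, otype, ← Ordinal.type_sum_lex]
  refine (RelEmbedding.ofMonotone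
    (Sum.elim (fun a => (⟨a.1, a.2.1⟩ : S)) (fun a => (⟨a.1, a.2.1⟩ : S))) ?_).ordinal_type_le
  rintro (a | a) (b | b) hab
  · cases hab with | inl hab => exact hab
  · exact lt_of_lt_of_le a.2.2 b.2.2
  · cases hab
  · cases hab with | inr hab => exact hab

lemma otype_Iio (S : Set Ordinal.{0}) (x : S) :
    otype {y ∈ S | y < x.1} = typein (Subrel ((· < ·) : Ordinal.{0} → _ → Prop) (· ∈ S)) x := by
  rw [← Ordinal.type_subrel]
  refine RelIso.ordinal_type_eq ⟨⟨fun a => ⟨⟨a.1, a.2.1⟩, a.2.2⟩,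
    fun a => ⟨a.1.1, a.1.2, a.2⟩, fun a => rfl, fun a => rfl⟩, Iff.rfl⟩

/-- For any ultrafilter `U` on `ω` and any `h : ω → ω₁`, the minimum over all `X ∈ U` of the
order type of `h '' X` is an (additively) indecomposable ordinal, i.e. `ω ^ β` for some `β`. -/
theorem stmt0 (U : Ultrafilter ℕ) (h : ℕ → Ordinal.{0}) (hh : ∀ n, h n < ω₁) :
    ∃ β : Ordinal.{1}, sInf {o : Ordinal.{1} | ∃ X ∈ U, otype (h '' X) = o} = ω ^ β := by
  set T : Set Ordinal.{1} := {o : Ordinal.{1} | ∃ X ∈ U, otype (h '' X) = o} with hT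
  have hne : T.Nonempty := ⟨otype (h '' univ), univ, Filter.univ_mem, rfl⟩
  set μ := sInf T with hμ
  have hmem : μ ∈ T := csInf_mem hne
  obtain ⟨X, hXU, hX⟩ := hmem
  have hle : ∀ Y ∈ U, μ ≤ otype (h '' Y) := fun Y hY => csInf_le' ⟨Y, hY, rfl⟩
  -- μ ≠ 0
  have hμ0 : μ ≠ 0 := by
    rw [← hX]
    intro h0
    rw [otype, Ordinal.type_eq_zero_iff_isEmpty] at h0
    have hXne : X.Nonempty := Ultrafilter.nonempty_of_mem hXU
    obtain ⟨x, hx⟩ := hXne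
    exact h0.elim' ⟨h x, mem_image_of_mem h hx⟩
  -- principal
  have hprin : Ordinal.IsPrincipal (· + ·) μ := by
    rw [Ordinal.isPrincipal_add_iff_add_left_eq_self]
    intro a ha
    refine le_antisymm ?_ (le_add_self (a := μ) (b := a))
    set S := h '' X with hS
    have ha' : a < Ordinal.type (Subrel ((· < ·) : Ordinal.{0} → _ → Prop) (· ∈ S)) := by
      have := ha; rw [← hX] at this; exact this
    set x : S := Ordinal.enum _ ⟨a, ha'⟩ with hx
    set t : Ordinal.{0} := x.1 with ht
    have hIio : otype {y ∈ S | y < t} = a := by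
      rw [otype_Iio S x, hx, Ordinal.typein_enum]
    set X₁ := {n ∈ X | h n < t} with hX₁
    set X₂ := {n ∈ X | t ≤ h n} with hX₂
    have hcover : X₁ ∪ X₂ ∈ U := by
      have : X ⊆ X₁ ∪ X₂ := by
        intro n hn
        rcases lt_or_ge (h n) t with hc | hc
        · exact Or.inl ⟨hn, hc⟩
        · exact Or.inr ⟨hn, hc⟩
      exact U.mem_of_superset hXU this
    have hX2U : X₂ ∈ U := by
      rcases Ultrafilter.union_mem_iff.1 hcover with h1 | h2
      · exfalso
        have h1le : otype (h '' X₁) ≤ a := by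
          rw [← hIio]
          refine otype_mono ?_
          rintro y ⟨n, ⟨hnX, hnt⟩, rfl⟩
          exact ⟨mem_image_of_mem h hnX, hnt⟩
        exact absurd ((hle X₁ h1).trans h1le) (not_le.2 ha)
      · exact h2
    have h2le : μ ≤ otype {y ∈ S | t ≤ y} := by
      refine (hle X₂ hX2U).trans (otype_mono ?_)
      rintro y ⟨n, ⟨hnX, hnt⟩, rfl⟩
      exact ⟨mem_image_of_mem h hnX, hnt⟩
    calc a + μ ≤ otype {y ∈ S | y < t} + otype {y ∈ S | t ≤ y} := by
          rw [hIio]; exact add_le_add_right h2le a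
      _ ≤ otype S := otype_split S t
      _ = μ := hX
  rcases Ordinal.isPrincipal_add_iff_zero_or_omega0_opow.1 hprin with h0 | ⟨b, hb⟩
  · exact absurd h0 hμ0
  · exact ⟨b, hb.symm⟩
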